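/- arXiv:math/0308005 — 2 statements merged into one kernel-verified Lean document; each statement's English description precedes it below -/
import Mathlib

section
/- Let R be a commutative ring and M : ℕ → (R-modules) a family of R-modules, equipped with R-bilinear products ∘ : M p × M q → M (p+q) for all p, q. Assume the graded (right) pre-Lie identity: for all x ∈ M p, y ∈ M q, z ∈ M r, (x∘y)∘z − x∘(y∘z) = (−1)^{q·r} ((x∘z)∘y − x∘(z∘y)). Then the graded commutator [x,y] := x∘y − (−1)^{p·q} y∘x (for x ∈ M p, y ∈ M q, an element of M (p+q)) satisfies the graded Jacobi identity: for all x ∈ M p, y ∈ M q, z ∈ M r, (−1)^{p·r} [[x,y],z] + (−1)^{q·p} [[y,z],x] + (−1)^{r·q} [[z,x],y] = 0 in M (p+q+r). -/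
/-- Given an ℕ-graded family of `R`-modules (encoded as submodules
`𝒜 p` of an ambient `R`-module `M`) with a degree-additive `R`-bilinear product `mul`
satisfying the graded (right) pre-Lie identity with Koszul sign `(-1)^(q*r)`, the graded
commutator `br p q x y = x∘y - (-1)^(p*q) y∘x` lands in degree `p+q` and satisfies the
graded Jacobi identity. -/
theorem gradedPreLie_commutator_is_gradedLie {R M : Type*} [CommRing R] [AddCommGroup M]
    [Module R M]
    (𝒜 : ℕ → Submodule R M)
    (mul : M →ₗ[R] M →ₗ[R] M)
    (hdeg : ∀ p q : ℕ, ∀ x ∈ 𝒜 p, ∀ y ∈ 𝒜 q, mul x y ∈ 𝒜 (p + q))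
    (hpre : ∀ p q r : ℕ, ∀ x ∈ 𝒜 p, ∀ y ∈ 𝒜 q, ∀ z ∈ 𝒜 r,
      mul (mul x y) z - mul x (mul y z)
        = ((-1 : ℤ) ^ (q * r)) • (mul (mul x z) y - mul x (mul z y)))
    (br : ℕ → ℕ → M → M → M)
    (hbr : ∀ p q : ℕ, ∀ x y : M, br p q x y = mul x y - ((-1 : ℤ) ^ (p * q)) • mul y x) :
    ∀ p q r : ℕ, ∀ x ∈ 𝒜 p, ∀ y ∈ 𝒜 q, ∀ z ∈ 𝒜 r,
      br p q x y ∈ 𝒜 (p + q) ∧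
      ((-1 : ℤ) ^ (p * r)) • br (p + q) r (br p q x y) z
        + ((-1 : ℤ) ^ (q * p)) • br (q + r) p (br q r y z) x
        + ((-1 : ℤ) ^ (r * q)) • br (r + p) q (br r p z x) y = 0 := by
  intro p q r x hx y hy z hz
  constructor
  · rw [hbr]
    exact sub_mem (hdeg p q x hx y hy)
      (zsmul_mem (by simpa [Nat.add_comm] using hdeg q p y hy x hx) _)
  · have ha : (-1 : ℤ) ^ (p * q) * (-1 : ℤ) ^ (p * q) = 1 := by
      rw [← pow_add, ← two_mul, pow_mul]; norm_num
    have hb : (-1 : ℤ) ^ (q * r) * (-1 : ℤ) ^ (q * r) = 1 := by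
      rw [← pow_add, ← two_mul, pow_mul]; norm_num
    have hc : (-1 : ℤ) ^ (p * r) * (-1 : ℤ) ^ (p * r) = 1 := by
      rw [← pow_add, ← two_mul, pow_mul]; norm_num
    have e1 : ((-1 : ℤ)) ^ ((p + q) * r) = (-1 : ℤ) ^ (p * r) * (-1 : ℤ) ^ (q * r) := by
      rw [add_mul, pow_add]
    have e2 : ((-1 : ℤ)) ^ ((q + r) * p) = (-1 : ℤ) ^ (p * q) * (-1 : ℤ) ^ (p * r) := by
      rw [add_mul, pow_add, Nat.mul_comm q p, Nat.mul_comm r p]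
    have e3 : ((-1 : ℤ)) ^ ((r + p) * q) = (-1 : ℤ) ^ (q * r) * (-1 : ℤ) ^ (p * q) := by
      rw [add_mul, pow_add, Nat.mul_comm r q, Nat.mul_comm p q]
    have e4 : ((-1 : ℤ)) ^ (q * p) = (-1 : ℤ) ^ (p * q) := by rw [Nat.mul_comm]
    have e5 : ((-1 : ℤ)) ^ (r * q) = (-1 : ℤ) ^ (q * r) := by rw [Nat.mul_comm]
    have e6 : ((-1 : ℤ)) ^ (r * p) = (-1 : ℤ) ^ (p * r) := by rw [Nat.mul_comm]
    simp only [hbr, map_sub, map_zsmul, LinearMap.sub_apply, LinearMap.smul_apply,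
      e1, e2, e3, e4, e5, e6]
    have H1 := hpre p q r x hx y hy z hz
    have H2 := hpre q r p y hy z hz x hx
    have H3 := hpre r p q z hz x hx y hy
    rw [e6] at H2
    linear_combination (norm := module)
      ((-1 : ℤ) ^ (p * r)) • H1 + ((-1 : ℤ) ^ (p * q)) • H2 + ((-1 : ℤ) ^ (q * r)) • H3
      + ha • (((-1 : ℤ) ^ (q * r) * (-1 : ℤ) ^ (p * r)) • (mul x (mul z y))
              - ((-1 : ℤ) ^ (p * r)) • (mul x (mul y z)))
      + hb • (((-1 : ℤ) ^ (p * q) * (-1 : ℤ) ^ (p * r)) • (mul y (mul x z))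
              - ((-1 : ℤ) ^ (p * q)) • (mul y (mul z x)))
      + hc • (((-1 : ℤ) ^ (p * q) * (-1 : ℤ) ^ (q * r)) • (mul z (mul y x))
              - ((-1 : ℤ) ^ (q * r)) • (mul z (mul x y)))
end

section
/- Fix a commutative ring R and an R-module A, and let μ be a 2-cochain which is associative, i.e. μ(μ(a,b),c) = μ(a,μ(b,c)) for all a, b, c ∈ A. With ∘ the graded circle product, define for each p-cochain f the (p+1)-cochain ∂f := f∘μ − (−1)^{p−1} μ∘f. Then ∂ is a differential: ∂(∂f) = 0 for every p-cochain f. -/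
/-- Partial (insertion) composition `f ∘ᵢ g` of a `p`-cochain `f` with a `q`-cochain `g`
at the (1-based) slot `i`, producing an `n`-cochain where `n + 1 = p + q`
(i.e. `n = p + q - 1`).  Explicitly
`(f ∘ᵢ g)(a₁,…,aₙ) = f(a₁,…,a_{i−1}, g(aᵢ,…,a_{i+q−1}), a_{i+q},…,aₙ)`. -/
def pcomp {A : Type*} {p q n : ℕ} (hq : 1 ≤ q) (hn : n + 1 = p + q)
    (f : (Fin p → A) → A) (g : (Fin q → A) → A) (i : ℕ) :
    (Fin n → A) → A := fun a =>
  f fun k =>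
    if k.val + 1 < i then a ⟨k.val, by have hk := k.isLt; omega⟩
    else if k.val + 1 = i then
      g fun l => a ⟨k.val + l.val, by have hk := k.isLt; have hl := l.isLt; omega⟩
    else a ⟨k.val + q - 1, by have hk := k.isLt; omega⟩

/-- The graded circle (insertion) product of a `p`-cochain `f` and a `q`-cochain `g`:
`f∘g = Σ_{i=1}^{p} (−1)^{(i−1)(q+1)} f ∘ᵢ g`, a `(p+q-1)`-cochain. -/
def gcirc {A : Type*} [AddCommGroup A] {p q n : ℕ} (hq : 1 ≤ q) (hn : n + 1 = p + q)
    (f : (Fin p → A) → A) (g : (Fin q → A) → A) : (Fin n → A) → A :=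
  fun a => ∑ i ∈ Finset.Icc 1 p, ((-1 : ℤ) ^ ((i - 1) * (q + 1))) • pcomp hq hn f g i a

/-- Gerstenhaber's operadically defined differential with respect to a 2-cochain `μ`:
`∂f := f∘μ − (−1)^{p−1} μ∘f`, a `(p+1)`-cochain. -/
def hdel {A : Type*} [AddCommGroup A] {p : ℕ} (hp : 1 ≤ p)
    (μ : (Fin 2 → A) → A) (f : (Fin p → A) → A) : (Fin (p + 1) → A) → A :=
  gcirc (show (1 : ℕ) ≤ 2 by omega) (show p + 1 + 1 = p + 2 by omega) f μ
    - ((-1 : ℤ) ^ (p - 1)) • gcirc hp (show p + 1 + 1 = 2 + p by omega) μ f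

/-!
Expanding `(f ∘ g) ∘ h` summand by summand, `h` is inserted either into the copy of `g`, which
gives exactly `f ∘ (g ∘ h)`, or into another input of `f`. The terms in which `h` lands to the left
of `g` are, up to the Koszul sign `(-1)^{|g||h|}`, the terms of `(f ∘ h) ∘ g` in which `g` lands to
the right of `h` (Gerstenhaber's pre-Lie identity). For `g = h = μ` of odd degree the two kinds of
terms cancel, and associativity of `μ` says `μ ∘ μ = 0`, so `(f ∘ μ) ∘ μ = 0`; the identities for
`(μ, f, μ)` and `(μ, μ, f)` then cancel the remaining three terms of `∂∂f`.
-/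

open Finset

section Insertion

variable {A : Type*}

theorem pcomp_pcomp_of_lt {p q r m m' n : ℕ} (hq : 1 ≤ q) (hr : 1 ≤ r)
    (hm : m + 1 = p + q) (hn : n + 1 = m + r) (hm' : m' + 1 = p + r) (hn' : n + 1 = m' + q)
    (f : (Fin p → A) → A) (g : (Fin q → A) → A) (h : (Fin r → A) → A) {i j : ℕ} (hij : i < j) :
    pcomp hr hn (pcomp hq hm f g j) h i = pcomp hq hn' (pcomp hr hm' f h i) g (j + r - 1) := by
  funext a
  simp only [pcomp]
  congr 1; funext k
  grind

theorem pcomp_pcomp_of_le {p q r m n w : ℕ} (hq : 1 ≤ q) (hr : 1 ≤ r) (hw1 : 1 ≤ w)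
    (hm : m + 1 = p + q) (hn : n + 1 = m + r) (hw : w + 1 = q + r) (hn' : n + 1 = p + w)
    (f : (Fin p → A) → A) (g : (Fin q → A) → A) (h : (Fin r → A) → A)
    {i k : ℕ} (hi : 1 ≤ i) (hk : 1 ≤ k) (hkq : k ≤ q) :
    pcomp hr hn (pcomp hq hm f g i) h (i + k - 1) = pcomp hw1 hn' f (pcomp hr hw g h k) i := by
  funext a
  simp only [pcomp]
  congr 1; funext k
  grind

theorem exists_pcomp_apply_eq_linearMap {R : Type*} [Semiring R] [AddCommMonoid A] [Module R A]
    {p q n : ℕ} (hq : 1 ≤ q) (hn : n + 1 = p + q)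
    (f : MultilinearMap R (fun _ : Fin p => A) A) {i : ℕ} (hi : 1 ≤ i) (hip : i ≤ p)
    (a : Fin n → A) :
    ∃ (L : A →ₗ[R] A) (b : Fin q → A), ∀ g, pcomp hq hn f g i a = L (g b) := by
  let v : Fin p → A := fun k =>
    if k.val + 1 < i then a ⟨k, by omega⟩ else a ⟨k + q - 1, by omega⟩
  refine ⟨f.toLinearMap v ⟨i - 1, by omega⟩, fun l => a ⟨i - 1 + l, by omega⟩, fun g => ?_⟩
  rw [MultilinearMap.toLinearMap_apply, pcomp]
  congr 1; funext k
  rcases eq_or_ne k ⟨i - 1, by omega⟩ with rfl | hk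
  · grind [Function.update_self]
  · grind [Function.update_of_ne]

section Linearity

variable [AddCommGroup A] {p q n : ℕ} (hq : 1 ≤ q) (hn : n + 1 = p + q)

theorem gcirc_sub_left (f₁ f₂ : (Fin p → A) → A) (g : (Fin q → A) → A) :
    gcirc hq hn (f₁ - f₂) g = gcirc hq hn f₁ g - gcirc hq hn f₂ g := by
  funext a
  simp only [gcirc, pcomp, Pi.sub_apply, smul_sub, sum_sub_distrib]

theorem gcirc_smul_left (c : ℤ) (f : (Fin p → A) → A) (g : (Fin q → A) → A) :
    gcirc hq hn (c • f) g = c • gcirc hq hn f g := by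
  funext a
  simp only [gcirc, pcomp, Pi.smul_apply, smul_sum, smul_comm c]

theorem gcirc_zero_left (g : (Fin q → A) → A) : gcirc hq hn (0 : (Fin p → A) → A) g = 0 := by
  funext a
  simp only [gcirc, pcomp, Pi.zero_apply, smul_zero, sum_const_zero]

variable {R : Type*} [Semiring R] [Module R A] (f : MultilinearMap R (fun _ : Fin p => A) A)

theorem gcirc_sub_right (g₁ g₂ : (Fin q → A) → A) :
    gcirc hq hn f (g₁ - g₂) = gcirc hq hn f g₁ - gcirc hq hn f g₂ := by
  funext a
  simp only [gcirc, Pi.sub_apply, ← sum_sub_distrib, ← smul_sub]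
  refine sum_congr rfl fun i hi => ?_
  obtain ⟨L, b, hL⟩ := exists_pcomp_apply_eq_linearMap hq hn f (mem_Icc.1 hi).1 (mem_Icc.1 hi).2 a
  simp only [hL, Pi.sub_apply, map_sub]

theorem gcirc_smul_right (c : ℤ) (g : (Fin q → A) → A) :
    gcirc hq hn f (c • g) = c • gcirc hq hn f g := by
  funext a
  simp only [gcirc, Pi.smul_apply, smul_sum]
  refine sum_congr rfl fun i hi => ?_
  obtain ⟨L, b, hL⟩ := exists_pcomp_apply_eq_linearMap hq hn f (mem_Icc.1 hi).1 (mem_Icc.1 hi).2 a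
  simp only [hL, Pi.smul_apply, map_zsmul, smul_comm c]

theorem gcirc_zero_right : gcirc hq hn f (0 : (Fin q → A) → A) = 0 := by
  funext a
  simp only [gcirc, Pi.zero_apply]
  refine sum_eq_zero fun i hi => ?_
  obtain ⟨L, b, hL⟩ := exists_pcomp_apply_eq_linearMap hq hn f (mem_Icc.1 hi).1 (mem_Icc.1 hi).2 a
  simp only [hL, Pi.zero_apply, map_zero, smul_zero]

end Linearity

theorem sum_Icc_eq_sum_Ico_add_sum_Icc_add_sum_Ioc {M : Type*} [AddCommMonoid M] (F : ℕ → M)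
    {p q m i : ℕ} (hm : m + 1 = p + q) (hq : 1 ≤ q) (hi : 1 ≤ i) (hip : i ≤ p) :
    ∑ j ∈ Icc 1 m, F j =
      ∑ j ∈ Ico 1 i, F j + ∑ k ∈ Icc 1 q, F (i + k - 1) + ∑ j ∈ Ioc i p, F (j + q - 1) := by
  have hmid : ∑ k ∈ Icc 1 q, F (i + k - 1) = ∑ j ∈ Ico i (i + q), F j := by
    rw [← Ico_add_one_right_eq_Icc,
      sum_congr rfl fun k _ => congrArg F (show i + k - 1 = k + (i - 1) by omega), sum_Ico_add']
    congr 1; congr 1 <;> omega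
  have hright : ∑ j ∈ Ioc i p, F (j + q - 1) = ∑ j ∈ Ico (i + q) (m + 1), F j := by
    rw [← Ico_add_one_add_one_eq_Ioc,
      sum_congr rfl fun j _ => congrArg F (show j + q - 1 = j + (q - 1) by omega), sum_Ico_add']
    congr 1; congr 1 <;> omega
  rw [hmid, hright, sum_Ico_consecutive _ hi (by omega), sum_Ico_consecutive _ (by omega) (by omega),
    Ico_add_one_right_eq_Icc]

section PreLie

variable [AddCommGroup A] {p q r m n : ℕ}

theorem pcomp_gcirc_left (hq : 1 ≤ q) (hr : 1 ≤ r) (hm : m + 1 = p + q) (hn : n + 1 = m + r)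
    (f : (Fin p → A) → A) (g : (Fin q → A) → A) (h : (Fin r → A) → A) (j : ℕ) (a : Fin n → A) :
    pcomp hr hn (gcirc hq hm f g) h j a =
      ∑ i ∈ Icc 1 p, ((-1 : ℤ) ^ ((i - 1) * (q + 1))) • pcomp hr hn (pcomp hq hm f g i) h j a :=
  rfl

theorem pcomp_gcirc_right {R : Type*} [Semiring R] [Module R A] {w : ℕ} (hr : 1 ≤ r)
    (hw1 : 1 ≤ w) (hw : w + 1 = q + r) (hn : n + 1 = p + w)
    (f : MultilinearMap R (fun _ : Fin p => A) A) (g : (Fin q → A) → A) (h : (Fin r → A) → A)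
    {i : ℕ} (hi : 1 ≤ i) (hip : i ≤ p) (a : Fin n → A) :
    pcomp hw1 hn f (gcirc hr hw g h) i a =
      ∑ k ∈ Icc 1 q, ((-1 : ℤ) ^ ((k - 1) * (r + 1))) • pcomp hw1 hn f (pcomp hr hw g h k) i a := by
  obtain ⟨L, b, hL⟩ := exists_pcomp_apply_eq_linearMap hw1 hn f hi hip a
  simp only [hL, gcirc, map_sum, map_zsmul]

/-- The terms of `(f ∘ g) ∘ h` in which `h` is inserted into an input of `f` to the right of the
one receiving `g`. -/
def gcircDisjoint (hq : 1 ≤ q) (hr : 1 ≤ r) (hm : m + 1 = p + q) (hn : n + 1 = m + r)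
    (f : (Fin p → A) → A) (g : (Fin q → A) → A) (h : (Fin r → A) → A) : (Fin n → A) → A :=
  fun a => ∑ i ∈ Icc 1 p, ∑ j ∈ Ioc i p,
    ((-1 : ℤ) ^ ((i - 1) * (q + 1) + (j + q - 2) * (r + 1))) •
      pcomp hr hn (pcomp hq hm f g i) h (j + q - 1) a

theorem sum_pcomp_pcomp_nested_eq_gcirc_gcirc {R : Type*} [Semiring R] [Module R A] {w : ℕ}
    (hq : 1 ≤ q) (hr : 1 ≤ r) (hw1 : 1 ≤ w) (hm : m + 1 = p + q) (hn : n + 1 = m + r)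
    (hw : w + 1 = q + r) (hnw : n + 1 = p + w)
    (f : MultilinearMap R (fun _ : Fin p => A) A) (g : (Fin q → A) → A) (h : (Fin r → A) → A)
    (a : Fin n → A) :
    ∑ i ∈ Icc 1 p, ∑ k ∈ Icc 1 q, ((-1 : ℤ) ^ ((i - 1) * (q + 1) + (i + k - 1 - 1) * (r + 1))) •
      pcomp hr hn (pcomp hq hm f g i) h (i + k - 1) a = gcirc hw1 hnw f (gcirc hr hw g h) a := by
  refine sum_congr rfl fun i hi => ?_
  obtain ⟨hi1, hip⟩ := mem_Icc.1 hi
  rw [pcomp_gcirc_right hr hw1 hw hnw f g h hi1 hip, smul_sum]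
  refine sum_congr rfl fun k hk => ?_
  obtain ⟨hk1, hkq⟩ := mem_Icc.1 hk
  rw [smul_smul, ← pow_add, ← pcomp_pcomp_of_le hq hr hw1 hm hn hw hnw f g h hi1 hk1 hkq]
  congr 1
  apply neg_one_pow_congr
  obtain ⟨i, rfl⟩ := Nat.exists_eq_add_of_le' hi1
  obtain ⟨k, rfl⟩ := Nat.exists_eq_add_of_le' hk1
  obtain ⟨q, rfl⟩ := Nat.exists_eq_add_of_le' hq
  rw [show i + 1 + (k + 1) - 1 - 1 = i + k by omega, show w = q + 1 + r - 1 by omega]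
  simp [parity_simps, -Nat.not_even_iff_odd]
  tauto

theorem sum_pcomp_pcomp_of_lt_eq_gcircDisjoint {m' : ℕ} (hq : 1 ≤ q) (hr : 1 ≤ r)
    (hm : m + 1 = p + q) (hn : n + 1 = m + r) (hm' : m' + 1 = p + r) (hn' : n + 1 = m' + q)
    (f : (Fin p → A) → A) (g : (Fin q → A) → A) (h : (Fin r → A) → A) (a : Fin n → A) :
    ∑ i ∈ Icc 1 p, ∑ j ∈ Ico 1 i, ((-1 : ℤ) ^ ((i - 1) * (q + 1) + (j - 1) * (r + 1))) •
      pcomp hr hn (pcomp hq hm f g i) h j a =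
        ((-1 : ℤ) ^ ((q + 1) * (r + 1))) • gcircDisjoint hr hq hm' hn' f h g a := by
  rw [gcircDisjoint, smul_sum]
  refine (sum_comm' (s' := fun j => Ioc j p) fun i j => ?_).trans (sum_congr rfl fun j hj => ?_)
  · simp only [mem_Icc, mem_Ico, mem_Ioc]
    omega
  rw [smul_sum]
  refine sum_congr rfl fun i hi => ?_
  obtain ⟨hji, hip⟩ := mem_Ioc.1 hi
  rw [smul_smul, ← pow_add, ← pcomp_pcomp_of_lt hq hr hm hn hm' hn' f g h hji]
  congr 1
  apply neg_one_pow_congr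
  obtain ⟨j, rfl⟩ := Nat.exists_eq_add_of_le' (mem_Icc.1 hj).1
  obtain ⟨r, rfl⟩ := Nat.exists_eq_add_of_le' hr
  obtain ⟨i, rfl⟩ : ∃ i', i = i' + 1 := ⟨i - 1, by omega⟩
  rw [show i + 1 + (r + 1) - 2 = i + r by omega]
  simp [parity_simps, -Nat.not_even_iff_odd]
  tauto

theorem gcirc_gcirc_eq_gcirc_gcirc_add {R : Type*} [Semiring R] [Module R A] {m' w : ℕ}
    (hq : 1 ≤ q) (hr : 1 ≤ r) (hw1 : 1 ≤ w) (hm : m + 1 = p + q) (hn : n + 1 = m + r)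
    (hm' : m' + 1 = p + r) (hn' : n + 1 = m' + q) (hw : w + 1 = q + r) (hnw : n + 1 = p + w)
    (f : MultilinearMap R (fun _ : Fin p => A) A) (g : (Fin q → A) → A) (h : (Fin r → A) → A) :
    gcirc hr hn (gcirc hq hm f g) h =
      gcirc hw1 hnw f (gcirc hr hw g h) + gcircDisjoint hq hr hm hn f g h +
        ((-1 : ℤ) ^ ((q + 1) * (r + 1))) • gcircDisjoint hr hq hm' hn' f h g := by
  funext a
  rw [Pi.add_apply, Pi.add_apply, Pi.smul_apply,
    ← sum_pcomp_pcomp_nested_eq_gcirc_gcirc hq hr hw1 hm hn hw hnw f g h a,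
    ← sum_pcomp_pcomp_of_lt_eq_gcircDisjoint hq hr hm hn hm' hn' f g h a, gcircDisjoint,
    ← sum_add_distrib, ← sum_add_distrib]
  simp only [gcirc, pcomp_gcirc_left, smul_sum, smul_smul, ← pow_add]
  rw [sum_comm]
  refine sum_congr rfl fun i hi => ?_
  rw [sum_Icc_eq_sum_Ico_add_sum_Icc_add_sum_Ioc _ hm hq (mem_Icc.1 hi).1 (mem_Icc.1 hi).2]
  simp only [Nat.sub_sub, Nat.reduceAdd, add_comm ((_ - _) * (r + 1))]
  rw [add_assoc, add_comm]

end PreLie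

theorem gcirc_self_eq_zero_of_assoc [AddCommGroup A] {n : ℕ} (μ : (Fin 2 → A) → A)
    (hassoc : ∀ a b c : A, μ ![μ ![a, b], c] = μ ![a, μ ![b, c]])
    (h2 : 1 ≤ 2) (hn : n + 1 = 2 + 2) : gcirc h2 hn μ μ = 0 := by
  obtain rfl : n = 3 := by omega
  funext a
  have hleft : pcomp h2 hn μ μ 1 a = μ ![μ ![a 0, a 1], a 2] := by
    simp only [pcomp]
    congr 1; funext k
    fin_cases k
    · exact congrArg μ (funext fun l => by fin_cases l <;> rfl)
    · rfl
  have hright : pcomp h2 hn μ μ 2 a = μ ![a 0, μ ![a 1, a 2]] := by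
    simp only [pcomp]
    congr 1; funext k
    fin_cases k
    · rfl
    · exact congrArg μ (funext fun l => by fin_cases l <;> rfl)
  rw [gcirc, show Icc 1 2 = {1, 2} from rfl, sum_pair (by decide), hleft, hright, hassoc]
  simp

end Insertion

/-- If the 2-cochain `μ` is associative, then
`∂f := f∘μ − (−1)^{p−1} μ∘f` is a differential: `∂(∂f) = 0` for every `p`-cochain `f`. -/
theorem hdel_hdel_eq_zero {R A : Type*} [CommRing R] [AddCommGroup A] [Module R A]
    {p : ℕ} (hp : 1 ≤ p)
    (μ : MultilinearMap R (fun _ : Fin 2 => A) A)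
    (hassoc : ∀ a b c : A, μ ![μ ![a, b], c] = μ ![a, μ ![b, c]])
    (f : MultilinearMap R (fun _ : Fin p => A) A) :
    hdel (show 1 ≤ p + 1 by omega) (⇑μ) (hdel hp (⇑μ) (⇑f)) = 0 := by
  have h2 : 1 ≤ 2 := by omega
  have hμμ : gcirc h2 (show 3 + 1 = 2 + 2 from rfl) μ μ = 0 :=
    gcirc_self_eq_zero_of_assoc μ hassoc _ _
  have hfμμ := gcirc_gcirc_eq_gcirc_gcirc_add (m := p + 1) (n := p + 1 + 1) (m' := p + 1) (w := 3)
    h2 h2 (by omega) (by omega) (by omega) (by omega) (by omega) (by omega) (by omega) f μ μ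
  have hμfμ := gcirc_gcirc_eq_gcirc_gcirc_add (m := p + 1) (n := p + 1 + 1) (m' := 3) (w := p + 1)
    hp h2 (by omega) (by omega) (by omega) (by omega) (by omega) (by omega) (by omega) μ f μ
  have hμμf := gcirc_gcirc_eq_gcirc_gcirc_add (m := 3) (n := p + 1 + 1) (m' := p + 1) (w := p + 1)
    h2 hp (by omega) (by omega) (by omega) (by omega) (by omega) (by omega) (by omega) μ μ f
  have hodd : ∀ k, (-1 : ℤ) ^ ((k + 1) * (2 + 1)) = -(-1) ^ k := fun k => by
    rw [neg_one_pow_congr (n := k + 1) (by simp [parity_simps]), pow_succ, mul_neg_one]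
  have hpred : (-1 : ℤ) ^ (p - 1) = -(-1) ^ p := by
    obtain ⟨k, rfl⟩ := Nat.exists_eq_add_of_le' hp
    simp [pow_succ]
  rw [hμμ, gcirc_zero_right, hodd] at hfμμ
  rw [hodd] at hμfμ
  rw [hμμ, gcirc_zero_left, mul_comm (2 + 1), hodd] at hμμf
  simp only [hdel, gcirc_sub_left, gcirc_smul_left, gcirc_sub_right, gcirc_smul_right]
  rw [hfμμ, hμfμ, Nat.add_sub_cancel, hpred]
  -- splitting on `(-1) ^ p = ±1` lets `module` use `((-1) ^ p) ^ 2 = 1`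
  rcases neg_one_pow_eq_or ℤ p with ht | ht <;> rw [ht] at hμμf ⊢ <;>
    linear_combination (norm := module) hμμf
end
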